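/- arXiv:1803.02924 — 2 statements merged into one kernel-verified Lean document; each statement's English description precedes it below -/
import Mathlib

section
/- Let f : ℝⁿ → ℝ be differentiable, bounded below by f_low, and let ε_g > 0, ε_H > 0, and c > 0. Define K̄₂ = ⌈(3(f(x_0) − f_low)/c)·max{ε_g⁻³ε_H³, ε_H⁻³}⌉ + 2. Then there is no sequence x_0, x_1, …, x_{K̄₂} in ℝⁿ satisfying all of the following for every l ∈ {0, …, K̄₂ − 1}: (i) f(x_{l+1}) ≤ f(x_l); (ii) if ‖∇f(x_l)‖ ≤ ε_g then f(x_l) − f(x_{l+1}) ≥ c·ε_H³; (iii) if ‖∇f(x_l)‖ > ε_g and ‖∇f(x_{l+1})‖ > ε_g then f(x_l) − f(x_{l+1}) ≥ c·min{ε_g³ε_H⁻³, ε_H³}. -/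
open RealInnerProductSpace

/-!
Every two consecutive iterations decrease `f` by at least `c * δ` with
`δ = min (ε_g³ ε_H⁻³) ε_H³`: if the gradient at one of the two iterates is small, that
iteration alone decreases `f` by `c ε_H³ ≥ c δ`; otherwise the first one is a large-gradient
step into a large-gradient point. Since `max (ε_g⁻³ ε_H³) ε_H⁻³ = δ⁻¹`, the `K̄₂` iterations
contain more than `(f(x₀) - f_low) / (c δ)` such pairs, so `f` would drop below `f_low`.
-/

lemma max_inv_eq_inv_min {a b : ℝ} (ha : 0 < a) (hb : 0 < b) :
    max a⁻¹ b⁻¹ = (min a b)⁻¹ := by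
  rcases le_total a b with hab | hba
  · rw [min_eq_left hab, max_eq_left (inv_anti₀ ha hab)]
  · rw [min_eq_right hba, max_eq_right (inv_anti₀ hb hba)]

lemma lt_ceil_three_mul_add_two_div_two (X : ℝ) : X < ((⌈3 * X⌉₊ + 2) / 2 : ℕ) := by
  rcases le_or_gt X 0 with hX | hX
  · have : (1 : ℝ) ≤ ((⌈3 * X⌉₊ + 2) / 2 : ℕ) := by
      exact_mod_cast Nat.le_div_iff_mul_le two_pos |>.2 (by omega)
    linarith
  · have hceil : 3 * X ≤ ⌈3 * X⌉₊ := Nat.le_ceil _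
    have hhalf : ((⌈3 * X⌉₊ + 1 : ℕ) : ℝ) ≤ 2 * ((⌈3 * X⌉₊ + 2) / 2 : ℕ) := by
      exact_mod_cast (by omega : ⌈3 * X⌉₊ + 1 ≤ 2 * ((⌈3 * X⌉₊ + 2) / 2))
    push_cast at hhalf
    linarith

lemma le_sub_two_step_of_decrease {a : ℕ → ℝ} {P : ℕ → Prop} {d : ℝ} {l : ℕ}
    (hmono : a (l + 1) ≤ a l) (hmono' : a (l + 2) ≤ a (l + 1))
    (hP : P l → d ≤ a l - a (l + 1)) (hP' : P (l + 1) → d ≤ a (l + 1) - a (l + 2))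
    (hnotP : ¬P l → ¬P (l + 1) → d ≤ a l - a (l + 1)) :
    d ≤ a l - a (l + 2) := by
  by_cases hl : P l
  · linarith [hP hl]
  by_cases hl' : P (l + 1)
  · linarith [hP' hl']
  · linarith [hnotP hl hl']

lemma nat_mul_le_sub_of_two_step {a : ℕ → ℝ} {d : ℝ} {K : ℕ}
    (h : ∀ l, l + 1 < K → d ≤ a l - a (l + 2)) :
    ∀ m, 2 * m ≤ K → m * d ≤ a 0 - a (2 * m)
  | 0, _ => by simp
  | m + 1, hm => by
    have ih := nat_mul_le_sub_of_two_step h m (by omega)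
    have step := h (2 * m) (by omega)
    rw [show 2 * (m + 1) = 2 * m + 2 by ring]
    push_cast
    linarith

theorem stmt18_general
    {n : ℕ} (f : EuclideanSpace ℝ (Fin n) → ℝ) (f_low : ℝ)
    (hbound : ∀ z, f_low ≤ f z)
    (ε_g ε_H c : ℝ) (hεg : 0 < ε_g) (hεH : 0 < ε_H) (hc : 0 < c) :
    ∀ x : ℕ → EuclideanSpace ℝ (Fin n),
      ¬ (∀ l < ⌈3 * (f (x 0) - f_low) / c *
            max ((ε_g^3)⁻¹ * ε_H^3) ((ε_H^3)⁻¹)⌉₊ + 2,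
          f (x (l+1)) ≤ f (x l) ∧
          (‖gradient f (x l)‖ ≤ ε_g →
            f (x l) - f (x (l+1)) ≥ c * ε_H^3) ∧
          (ε_g < ‖gradient f (x l)‖ → ε_g < ‖gradient f (x (l+1))‖ →
            f (x l) - f (x (l+1)) ≥
              c * min (ε_g^3 * (ε_H^3)⁻¹) (ε_H^3))) := by
  intro x h
  set δ := min (ε_g^3 * (ε_H^3)⁻¹) (ε_H^3)
  have hδ : 0 < δ := lt_min (by positivity) (by positivity)
  have hM : max ((ε_g^3)⁻¹ * ε_H^3) ((ε_H^3)⁻¹) = δ⁻¹ := by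
    rw [← max_inv_eq_inv_min (by positivity) (by positivity), mul_inv, inv_inv, mul_comm]
  set X := (f (x 0) - f_low) / (c * δ)
  rw [hM, show 3 * (f (x 0) - f_low) / c * δ⁻¹ = 3 * X by ring] at h
  have hpair : ∀ l, l + 1 < ⌈3 * X⌉₊ + 2 → c * δ ≤ f (x l) - f (x (l + 2)) := by
    intro l hl
    obtain ⟨hmono, hsmall, hlarge⟩ := h l (by omega)
    obtain ⟨hmono', hsmall', -⟩ := h (l + 1) hl
    have hδ_le : c * δ ≤ c * ε_H ^ 3 := mul_le_mul_of_nonneg_left (min_le_right _ _) hc.le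
    exact le_sub_two_step_of_decrease (a := fun i ↦ f (x i))
      (P := fun i ↦ ‖gradient f (x i)‖ ≤ ε_g)
      hmono hmono' (fun hl ↦ (hsmall hl).trans' hδ_le) (fun hl ↦ (hsmall' hl).trans' hδ_le)
      (fun hl hl' ↦ hlarge (not_le.1 hl) (not_le.1 hl'))
  set m := (⌈3 * X⌉₊ + 2) / 2
  have hdecrease := nat_mul_le_sub_of_two_step hpair m (Nat.mul_div_le _ _)
  have hX : X * (c * δ) = f (x 0) - f_low := div_mul_cancel₀ _ (by positivity)
  have hm : X * (c * δ) < m * (c * δ) :=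
    mul_lt_mul_of_pos_right (lt_ceil_three_mul_add_two_div_two X) (by positivity)
  linarith [hbound (x (2 * m))]

/-- Theorem 4 (second-order iteration complexity, abstracted): no sequence of
iterates can satisfy the per-iteration decrease guarantees of the damped
Newton-CG algorithm for `K̄₂` consecutive iterations. -/
theorem stmt18
    {n : ℕ} (f : EuclideanSpace ℝ (Fin n) → ℝ) (f_low : ℝ)
    (hdiff : Differentiable ℝ f)
    (hbound : ∀ z, f_low ≤ f z)
    (ε_g ε_H c : ℝ) (hεg : 0 < ε_g) (hεH : 0 < ε_H) (hc : 0 < c) :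
    ∀ x : ℕ → EuclideanSpace ℝ (Fin n),
      ¬ (∀ l < ⌈3 * (f (x 0) - f_low) / c *
            max ((ε_g^3)⁻¹ * ε_H^3) ((ε_H^3)⁻¹)⌉₊ + 2,
          f (x (l+1)) ≤ f (x l) ∧
          (‖gradient f (x l)‖ ≤ ε_g →
            f (x l) - f (x (l+1)) ≥ c * ε_H^3) ∧
          (ε_g < ‖gradient f (x l)‖ → ε_g < ‖gradient f (x (l+1))‖ →
            f (x l) - f (x (l+1)) ≥
              c * min (ε_g^3 * (ε_H^3)⁻¹) (ε_H^3))) :=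
  stmt18_general f f_low hbound ε_g ε_H c hεg hεH hc
end

section
/- Let H be a nonzero symmetric n×n real matrix with smallest and largest eigenvalues λ_min and λ_max, and let ξ_min, ξ_max be real numbers with λ_min ≤ ξ_min ≤ ξ_max ≤ λ_max. Suppose ξ_max ≥ λ_max − (1/4)(λ_max − λ_min) and ξ_min ≤ λ_min + (1/4)(λ_max − λ_min). Then M := 2·max{|ξ_max|, |ξ_min|} satisfies ‖H‖ ≤ M ≤ 2‖H‖, where ‖H‖ = max{|λ_max|, |λ_min|} is the operator 2-norm of H. -/
/-! Both bounds are statements about real intervals. `[ξ_min, ξ_max] ⊆ [λ_min, λ_max]` gives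
`max{|ξ_max|, |ξ_min|} ≤ ‖H‖`. Conversely, the sign of `λ_min + λ_max` decides which end of
the spectrum carries the norm, and the quarter-accuracy hypothesis on the matching estimate
yields `2ξ_max ≥ λ_max` or `-2ξ_min ≥ -λ_min` respectively. -/

theorem max_abs_le_max_abs_of_le_of_le {a b x y : ℝ} (hax : a ≤ x) (hxy : x ≤ y) (hyb : y ≤ b) :
    max |y| |x| ≤ max |b| |a| := by
  rw [max_comm |b|]
  exact max_le (abs_le_max_abs_abs (hax.trans hxy) hyb) (abs_le_max_abs_abs hax (hxy.trans hyb))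

theorem max_abs_le_two_mul_max_abs_of_quarter_close {a b x y : ℝ} (hab : a ≤ b)
    (hy : y ≥ b - 1/4 * (b - a)) (hx : x ≤ a + 1/4 * (b - a)) :
    max |b| |a| ≤ 2 * max |y| |x| := by
  have hyM : y ≤ max |y| |x| := (le_abs_self y).trans (le_max_left _ _)
  have hxM : -x ≤ max |y| |x| := (neg_le_abs x).trans (le_max_right _ _)
  have ⟨hb, ha⟩ : b ≤ 2 * max |y| |x| ∧ -a ≤ 2 * max |y| |x| := by
    rcases le_total 0 (a + b) with h | h <;> constructor <;> linarith
  exact max_le (abs_le.2 ⟨by linarith, hb⟩) (abs_le.2 ⟨by linarith, by linarith⟩)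

theorem stmt19_general
    (lmin lmax xmin xmax : ℝ)
    (h1 : lmin ≤ xmin) (h2 : xmin ≤ xmax) (h3 : xmax ≤ lmax)
    (h4 : xmax ≥ lmax - 1/4 * (lmax - lmin))
    (h5 : xmin ≤ lmin + 1/4 * (lmax - lmin)) :
    max |lmax| |lmin| ≤ 2 * max |xmax| |xmin| ∧
    2 * max |xmax| |xmin| ≤ 2 * max |lmax| |lmin| :=
  ⟨max_abs_le_two_mul_max_abs_of_quarter_close (h1.trans (h2.trans h3)) h4 h5,
    by linarith [max_abs_le_max_abs_of_le_of_le h1 h2 h3]⟩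

/-- Accuracy of the norm estimate in the first phase of the Lanczos method
with upper bound estimation (Lemma 8): if `ξ_min, ξ_max` estimate the extreme
eigenvalues of a nonzero symmetric matrix `H` to relative precision `1/4`,
then `M := 2·max{|ξ_max|, |ξ_min|}` satisfies `‖H‖ ≤ M ≤ 2‖H‖`, where
`‖H‖ = max{|λ_max|, |λ_min|}` is the operator 2-norm of `H`. -/
theorem stmt19
    {n : ℕ} (H : Matrix (Fin n) (Fin n) ℝ) (hH : H.IsHermitian) (hne : H ≠ 0)
    (lmin lmax xmin xmax : ℝ)
    (hmin : IsLeast (Set.range hH.eigenvalues) lmin)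
    (hmax : IsGreatest (Set.range hH.eigenvalues) lmax)
    (h1 : lmin ≤ xmin) (h2 : xmin ≤ xmax) (h3 : xmax ≤ lmax)
    (h4 : xmax ≥ lmax - 1/4 * (lmax - lmin))
    (h5 : xmin ≤ lmin + 1/4 * (lmax - lmin)) :
    max |lmax| |lmin| ≤ 2 * max |xmax| |xmin| ∧
    2 * max |xmax| |xmin| ≤ 2 * max |lmax| |lmin| :=
  stmt19_general lmin lmax xmin xmax h1 h2 h3 h4 h5
end
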